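/- Let X be an affine complex with tame generic discrete Morse function F, sharp piecewise affine metric, and associated pl function f on the barycentric subdivision X₁. Let q be an (i−1)-dimensional vertex and p an adjacent i-dimensional vertex with f(q) > f(p). Then the cell σ_p of X corresponding to p is entirely swept by gradient trajectories of f starting at q. -/

import Mathlib

open EuclideanGeometry Real

/-- A geometric model of the barycentric subdivision `X₁` of a finite affine complex `X`,
affinely embedded in a Euclidean space.  The vertices `V` of `X₁` correspond to the cells
of `X`; `vdim u` is the dimension of the cell of `X` corresponding to `u` and `F u` the
value of the discrete Morse function on that cell.  The simplices of `X₁` are flags of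
incident cells of `X` (so two vertices span an edge iff the corresponding cells are
incident), and the piecewise linear function `f` is the affine extension of the vertex
values `F`. -/
structure PLComplex where
  N : ℕ
  V : Type
  [fintypeV : Fintype V]
  [decEqV : DecidableEq V]
  pos : V → EuclideanSpace ℝ (Fin N)
  vdim : V → ℕ
  F : V → ℝ
  simplices : Finset (Finset V)
  nonempty_mem : ∀ s ∈ simplices, s.Nonempty
  down_closed : ∀ s ∈ simplices, ∀ t ⊆ s, t.Nonempty → t ∈ simplices
  singleton_mem : ∀ u : V, {u} ∈ simplices
  indep : ∀ s ∈ simplices, AffineIndependent ℝ (fun x : ↥s => pos x)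
  flag : ∀ s ∈ simplices, ∀ u ∈ s, ∀ w ∈ s, u ≠ w → vdim u ≠ vdim w

attribute [instance] PLComplex.fintypeV PLComplex.decEqV

namespace PLComplex

variable (C : PLComplex)

/-- The geometric realization of a simplex of `X₁`. -/
def geom (s : Finset C.V) : Set (EuclideanSpace ℝ (Fin C.N)) :=
  convexHull ℝ (C.pos '' ↑s)

/-- Two vertices of `X₁` are adjacent iff they span an edge, i.e. the corresponding cells
of `X` are incident. -/
def Adj (u w : C.V) : Prop :=
  u ≠ w ∧ ∃ s ∈ C.simplices, u ∈ s ∧ w ∈ s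

/-- `F` is a discrete Morse function on the underlying complex `X`. -/
def IsDiscreteMorse : Prop :=
  ∀ u : C.V,
    {w | C.Adj u w ∧ C.vdim w = C.vdim u + 1 ∧ C.F w ≤ C.F u}.Subsingleton ∧
    {w | C.Adj u w ∧ C.vdim w + 1 = C.vdim u ∧ C.F u ≤ C.F w}.Subsingleton

/-- `F` is generic: distinct values on incident cells. -/
def Generic : Prop := ∀ u w : C.V, C.Adj u w → C.F u ≠ C.F w

/-- `F` is tame: a face of codimension at least two has strictly smaller value. -/
def Tame : Prop :=
  ∀ u w : C.V, C.Adj u w → C.vdim u + 2 ≤ C.vdim w → C.F u < C.F w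

/-- The vertex `u` of `X₁` is critical: the corresponding cell of `X` is critical for
the discrete Morse function `F`. -/
def Critical (u : C.V) : Prop :=
  (¬ ∃ w, C.Adj u w ∧ C.vdim w = C.vdim u + 1 ∧ C.F w ≤ C.F u) ∧
  (¬ ∃ w, C.Adj u w ∧ C.vdim w + 1 = C.vdim u ∧ C.F u ≤ C.F w)

/-- The (Euclidean) piecewise affine metric is sharp: every 2-plane section through a
vertex of a simplex that cuts out a nondegenerate triangle is acute-angled. -/
def Sharp : Prop :=
  ∀ s ∈ C.simplices, ∀ a ∈ C.pos '' ↑s, ∀ b c : EuclideanSpace ℝ (Fin C.N),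
    AffineIndependent ℝ ![a, b, c] →
    (∃ L : AffineSubspace ℝ (EuclideanSpace ℝ (Fin C.N)), a ∈ L ∧
      Module.finrank ℝ L.direction = 2 ∧
      (L : Set (EuclideanSpace ℝ (Fin C.N))) ∩ C.geom s = convexHull ℝ {a, b, c}) →
    ∠ b a c < π / 2 ∧ ∠ a b c < π / 2 ∧ ∠ a c b < π / 2

/-- `u` is the negative gradient (in the Euclidean metric) of the affine extension `f` of
the vertex values `F` restricted to the simplex `s`. -/
def IsNegGradOn (s : Finset C.V) (u : EuclideanSpace ℝ (Fin C.N)) : Prop :=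
  u ∈ vectorSpan ℝ (C.pos '' ↑s) ∧
  ∀ a ∈ s, ∀ b ∈ s, (inner ℝ u (C.pos a - C.pos b) : ℝ) = C.F b - C.F a

/-- A gradient trajectory of the piecewise linear function `f` on `X₁`: a concatenation of
`k` affine segments, the `l`-th defined on `[t l, t (l+1)]`, each contained in a simplex of
`X₁` and with constant derivative the negative gradient of `f` on that simplex. -/
def IsTraj (k : ℕ) (t : ℕ → ℝ) (γ : ℝ → EuclideanSpace ℝ (Fin C.N)) : Prop :=
  (∀ l < k, t l ≤ t (l + 1)) ∧
  ∀ l < k, ∃ s ∈ C.simplices, ∃ u, C.IsNegGradOn s u ∧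
    ∀ r ∈ Set.Icc (t l) (t (l + 1)),
      γ r ∈ C.geom s ∧ γ r = γ (t l) + (r - t l) • u

/-- The `i`-th rib `X₁^{(i)}`: the barycentric subdivision of the `i`-skeleton of `X`,
i.e. the union of the simplices of `X₁` all of whose vertices correspond to cells of
dimension at most `i`. -/
def rib (i : ℕ) : Set (EuclideanSpace ℝ (Fin C.N)) :=
  ⋃ s ∈ {s | s ∈ C.simplices ∧ ∀ u ∈ s, C.vdim u ≤ i}, C.geom s

/-- The closed cell of `X` corresponding to the vertex `p` of `X₁`: the union of the
simplices of `X₁` containing `p` whose vertices all have dimension at most `vdim p`. -/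
def cellOf (p : C.V) : Set (EuclideanSpace ℝ (Fin C.N)) :=
  ⋃ s ∈ {s | s ∈ C.simplices ∧ p ∈ s ∧ ∀ u ∈ s, C.vdim u ≤ C.vdim p}, C.geom s

end PLComplex

/-!
A gradient trajectory from `q` first runs down the edge to `p`, and then down the edge from `p`
to any other vertex `v` of a simplex of `σ_p`: if `v` is a facet of `p` other than `q` then
`F v < F p`, since the discrete Morse condition allows only one facet of `p` above it, and a
face of higher codimension lies below `p` by tameness. Once all vertices of a simplex `s` are
reached, so is every point `x` of `s`: flowing backwards from `x` along the (nonzero, by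
genericity) gradient of `f` on `s` one hits a facet of `s`, reached by induction, and the forward
flow on `s` then carries this point to `x`.
-/

section Geometry

variable {E : Type*}

theorem AffineIndependent.exists_mem_vectorSpan_inner_sub_eq {ι : Type*} [Finite ι]
    [NormedAddCommGroup E] [InnerProductSpace ℝ E] {p : ι → E} (hp : AffineIndependent ℝ p)
    (g : ι → ℝ) :
    ∃ u ∈ vectorSpan ℝ (Set.range p), ∀ i j, inner ℝ u (p i - p j) = g i - g j := by
  rcases isEmpty_or_nonempty ι with hι | ⟨⟨i₀⟩⟩
  · exact ⟨0, Submodule.zero_mem _, fun i => isEmptyElim i⟩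
  set S := vectorSpan ℝ (Set.range p)
  have hli := (affineIndependent_iff_linearIndependent_vsub ℝ p i₀).mp hp
  let b : Module.Basis {i // i ≠ i₀} ℝ S := (Module.Basis.span hli).map
    (LinearEquiv.ofEq _ _ (vectorSpan_range_eq_span_range_vsub_right_ne ℝ p i₀).symm)
  let φ : S →ₗ[ℝ] ℝ := b.constr ℝ fun i => g i - g i₀
  let u : S := (InnerProductSpace.toDual ℝ S).symm (LinearMap.toContinuousLinearMap φ)
  have hbase : ∀ i, inner ℝ (u : E) (p i - p i₀) = g i - g i₀ := by
    intro i
    by_cases hi : i = i₀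
    · simp [hi]
    have hb : (b ⟨i, hi⟩ : E) = p i - p i₀ := by simp [b, Module.Basis.span_apply]
    rw [← hb, ← Submodule.coe_inner, InnerProductSpace.toDual_symm_apply]
    simp [φ]
  refine ⟨u, u.2, fun i j => ?_⟩
  rw [show p i - p j = (p i - p i₀) - (p j - p i₀) by abel, inner_sub_right, hbase, hbase]
  ring

variable [AddCommGroup E] [Module ℝ E]

theorem exists_sum_eq_zero_of_mem_vectorSpan {T : Finset E} {v : E}
    (hv : v ∈ vectorSpan ℝ (T : Set E)) :
    ∃ d : E → ℝ, ∑ z ∈ T, d z = 0 ∧ ∑ z ∈ T, d z • z = v := by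
  classical
  rw [vectorSpan_def] at hv
  induction hv using Submodule.span_induction with
  | mem w hw =>
    obtain ⟨a, ha, b, hb, rfl⟩ := hw
    rw [Finset.mem_coe] at ha hb
    refine ⟨fun z => (if z = a then 1 else 0) - (if z = b then 1 else 0), ?_, ?_⟩
    · simp [Finset.sum_sub_distrib, ha, hb]
    · simp [sub_smul, Finset.sum_sub_distrib, ha, hb]
  | zero => exact ⟨0, by simp, by simp⟩
  | add w w' _ _ hw hw' =>
    obtain ⟨d, hd, rfl⟩ := hw
    obtain ⟨d', hd', rfl⟩ := hw'
    exact ⟨d + d', by simp [Finset.sum_add_distrib, hd, hd'],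
      by simp [add_smul, Finset.sum_add_distrib]⟩
  | smul c w _ hw =>
    obtain ⟨d, hd, rfl⟩ := hw
    exact ⟨c • d, by simp [← Finset.mul_sum, hd], by simp [Finset.smul_sum, smul_smul]⟩

theorem exists_nonneg_add_mul_eq_zero {ι : Type*} {s : Finset ι} {w d : ι → ℝ}
    (hw : ∀ i ∈ s, 0 ≤ w i) (hd : ∃ i ∈ s, d i < 0) :
    ∃ i ∈ s, ∃ r : ℝ, 0 ≤ r ∧ (∀ j ∈ s, 0 ≤ w j + r * d j) ∧ w i + r * d i = 0 := by
  classical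
  obtain ⟨i, hi, hmin⟩ := (s.filter fun j => d j < 0).exists_min_image (fun j => w j / -d j)
    (by simpa [Finset.filter_nonempty_iff] using hd)
  rw [Finset.mem_filter] at hi
  refine ⟨i, hi.1, w i / -d i, div_nonneg (hw i hi.1) (by linarith [hi.2]), fun j hj => ?_,
    by field_simp [hi.2.ne]; ring⟩
  rcases le_or_gt 0 (d j) with hdj | hdj
  · exact add_nonneg (hw j hj) (mul_nonneg (div_nonneg (hw i hi.1) (by linarith [hi.2])) hdj)
  · have := (le_div_iff₀ (neg_pos.mpr hdj)).mp (hmin j (Finset.mem_filter.mpr ⟨hj, hdj⟩))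
    linarith

theorem exists_add_smul_mem_convexHull_erase [DecidableEq E] {T : Finset E} {x v : E}
    (hx : x ∈ convexHull ℝ (T : Set E)) (hv : v ∈ vectorSpan ℝ (T : Set E)) (hv0 : v ≠ 0) :
    ∃ z ∈ T, ∃ r : ℝ, 0 ≤ r ∧ x + r • v ∈ convexHull ℝ (T.erase z : Set E) := by
  obtain ⟨w, hw0, hw1, rfl⟩ := Finset.mem_convexHull'.mp hx
  obtain ⟨d, hd0, rfl⟩ := exists_sum_eq_zero_of_mem_vectorSpan hv
  have hneg : ∃ z ∈ T, d z < 0 := by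
    by_contra! hpos
    exact hv0 (Finset.sum_eq_zero fun z hz => by
      rw [(Finset.sum_eq_zero_iff_of_nonneg hpos).mp hd0 z hz, zero_smul])
  -- `x + r • v` has the barycentric weights `w + r * d`; `r` keeps them nonnegative and kills one.
  obtain ⟨z, hz, r, hr, hnonneg, hzero⟩ := exists_nonneg_add_mul_eq_zero hw0 hneg
  refine ⟨z, hz, r, hr, Finset.mem_convexHull'.mpr ⟨fun y => w y + r * d y,
    fun y hy => hnonneg y (Finset.mem_of_mem_erase hy), ?_, ?_⟩⟩
  · rw [Finset.sum_erase T (f := fun y => w y + r * d y) hzero, Finset.sum_add_distrib,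
      ← Finset.mul_sum, hw1, hd0]
    ring
  · rw [Finset.sum_erase T (f := fun y => (w y + r * d y) • y) (by simp [hzero]),
      Finset.smul_sum, ← Finset.sum_add_distrib]
    simp [add_smul, smul_smul]

theorem Convex.add_smul_mem_of_mem_Icc {s : Set E} (hs : Convex ℝ s) {x u : E} {r τ : ℝ}
    (hx : x ∈ s) (hxr : x + r • u ∈ s) (hτ : τ ∈ Set.Icc 0 r) : x + τ • u ∈ s := by
  rcases (hτ.1.trans hτ.2).eq_or_lt with hr | hr
  · obtain rfl : τ = 0 := le_antisymm (hr ▸ hτ.2) hτ.1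
    simpa using hx
  have := hs.add_smul_mem hx hxr ⟨div_nonneg hτ.1 hr.le, (div_le_one hr).mpr hτ.2⟩
  rwa [smul_smul, div_mul_cancel₀ _ hr.ne'] at this

end Geometry

namespace PLComplex

variable {C : PLComplex}

lemma pos_mem_geom {s : Finset C.V} {v : C.V} (hv : v ∈ s) : C.pos v ∈ C.geom s :=
  subset_convexHull ℝ _ (Set.mem_image_of_mem C.pos hv)

lemma Adj.symm {u w : C.V} (h : C.Adj u w) : C.Adj w u :=
  ⟨h.1.symm, h.2.imp fun _ ⟨hs, hu, hw⟩ => ⟨hs, hw, hu⟩⟩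

lemma pair_mem_simplices {u w : C.V} (h : C.Adj u w) : ({u, w} : Finset C.V) ∈ C.simplices := by
  obtain ⟨-, s, hs, hu, hw⟩ := h
  exact C.down_closed s hs _ (Finset.insert_subset hu (Finset.singleton_subset_iff.mpr hw))
    (Finset.insert_nonempty _ _)

lemma exists_isNegGradOn {s : Finset C.V} (hs : s ∈ C.simplices) : ∃ u, C.IsNegGradOn s u := by
  obtain ⟨u, hu, hgrad⟩ :=
    (C.indep s hs).exists_mem_vectorSpan_inner_sub_eq fun a => -C.F a
  refine ⟨u, by rwa [Set.image_eq_range], fun a ha b hb => ?_⟩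
  rw [hgrad ⟨a, ha⟩ ⟨b, hb⟩]
  ring

lemma IsNegGradOn.ne_zero (hgen : C.Generic) {s : Finset C.V}
    (hs : s ∈ C.simplices) (hnt : s.Nontrivial) {u : EuclideanSpace ℝ (Fin C.N)}
    (hu : C.IsNegGradOn s u) : u ≠ 0 := by
  rintro rfl
  obtain ⟨a, ha, b, hb, hab⟩ := hnt
  have := hu.2 a ha b hb
  rw [inner_zero_left] at this
  exact hgen a b ⟨hab, s, hs, ha, hb⟩ (by linarith)

lemma exists_sub_smul_mem_geom_erase {s : Finset C.V} {u x : EuclideanSpace ℝ (Fin C.N)}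
    (hu : C.IsNegGradOn s u) (hu0 : u ≠ 0) (hx : x ∈ C.geom s) :
    ∃ v ∈ s, ∃ r : ℝ, 0 ≤ r ∧ x - r • u ∈ C.geom (s.erase v) := by
  rw [geom, ← Finset.coe_image] at hx
  have hu' : -u ∈ vectorSpan ℝ (↑(s.image C.pos) : Set (EuclideanSpace ℝ (Fin C.N))) := by
    rw [Finset.coe_image]
    exact neg_mem hu.1
  obtain ⟨z, hz, r, hr, hmem⟩ :=
    exists_add_smul_mem_convexHull_erase hx hu' (neg_ne_zero.mpr hu0)
  obtain ⟨v, hv, rfl⟩ := Finset.mem_image.mp hz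
  refine ⟨v, hv, r, hr, ?_⟩
  rw [smul_neg, ← sub_eq_add_neg] at hmem
  rw [geom, ← Finset.coe_image]
  exact convexHull_mono (by exact_mod_cast Finset.erase_image_subset_image_erase _ _ _) hmem

def Reachable (q : C.V) (x : EuclideanSpace ℝ (Fin C.N)) : Prop :=
  ∃ (k : ℕ) (t : ℕ → ℝ) (γ : ℝ → EuclideanSpace ℝ (Fin C.N)),
    C.IsTraj k t γ ∧ γ (t 0) = C.pos q ∧ γ (t k) = x

lemma reachable_self (q : C.V) : C.Reachable q (C.pos q) :=
  ⟨0, fun _ => 0, fun _ => C.pos q, ⟨fun _ h => absurd h (Nat.not_lt_zero _),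
    fun _ h => absurd h (Nat.not_lt_zero _)⟩, rfl, rfl⟩

lemma IsTraj.time_le {k : ℕ} {t : ℕ → ℝ} {γ : ℝ → EuclideanSpace ℝ (Fin C.N)}
    (h : C.IsTraj k t γ) {i j : ℕ} (hij : i ≤ j) (hj : j ≤ k) : t i ≤ t j := by
  induction j, hij using Nat.le_induction with
  | base => exact le_rfl
  | succ j _ ih => exact (ih (by omega)).trans (h.1 j (by omega))

lemma Reachable.add_smul {q : C.V} {y u : EuclideanSpace ℝ (Fin C.N)} {s : Finset C.V}
    {r : ℝ} (hy : C.Reachable q y) (hs : s ∈ C.simplices) (hu : C.IsNegGradOn s u)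
    (hr : 0 ≤ r) (hys : y ∈ C.geom s) (hyr : y + r • u ∈ C.geom s) :
    C.Reachable q (y + r • u) := by
  obtain ⟨k, t, γ, hγ, h0, hk⟩ := hy
  set t' : ℕ → ℝ := fun l => if l ≤ k then t l else t k + r
  set γ' : ℝ → EuclideanSpace ℝ (Fin C.N) := fun τ =>
    if τ ≤ t k then γ τ else y + (τ - t k) • u
  have hγ'_old : ∀ τ ≤ t k, γ' τ = γ τ := fun τ hτ => if_pos hτ
  have hγ'_new : ∀ τ, t k ≤ τ → γ' τ = y + (τ - t k) • u := by
    intro τ hτ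
    rcases hτ.eq_or_lt with rfl | hlt
    · simp [γ', hk]
    · exact if_neg (not_le.mpr hlt)
  refine ⟨k + 1, t', γ', ⟨fun l hl => ?_, fun l hl => ?_⟩, ?_, ?_⟩
  · rcases Nat.lt_succ_iff_lt_or_eq.mp hl with hl | rfl
    · simpa [t', hl.le, Nat.succ_le_of_lt hl] using hγ.1 l hl
    · simpa [t'] using hr
  · rcases Nat.lt_succ_iff_lt_or_eq.mp hl with hl | rfl
    · obtain ⟨s', hs', u', hu', hseg⟩ := hγ.2 l hl
      refine ⟨s', hs', u', hu', fun τ hτ => ?_⟩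
      simp only [t', if_pos hl.le, if_pos (Nat.succ_le_of_lt hl)] at hτ ⊢
      rw [hγ'_old τ (hτ.2.trans (hγ.time_le (Nat.succ_le_of_lt hl) le_rfl)),
        hγ'_old _ (hγ.time_le hl.le le_rfl)]
      exact hseg τ hτ
    · refine ⟨s, hs, u, hu, fun τ hτ => ?_⟩
      simp only [t', le_refl, if_true, Nat.not_succ_le_self, if_false] at hτ ⊢
      rw [hγ'_new τ hτ.1, hγ'_new _ le_rfl, sub_self, zero_smul, add_zero]
      exact ⟨(convex_convexHull ℝ _).add_smul_mem_of_mem_Icc hys hyr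
        ⟨sub_nonneg.mpr hτ.1, by linarith [hτ.2]⟩, rfl⟩
  · rw [show t' 0 = t 0 from if_pos (Nat.zero_le k),
      hγ'_old _ (hγ.time_le (Nat.zero_le k) le_rfl), h0]
  · simp only [t', Nat.not_succ_le_self, if_false]
    rw [hγ'_new _ (le_add_of_nonneg_right hr), add_sub_cancel_left]

lemma Reachable.of_edge {q a b : C.V} (hab : C.Adj a b) (hF : C.F b < C.F a)
    (ha : C.Reachable q (C.pos a)) : C.Reachable q (C.pos b) := by
  obtain ⟨u, hu⟩ := exists_isNegGradOn (pair_mem_simplices hab)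
  have hspan := hu.1
  rw [Finset.coe_pair, Set.image_pair, mem_vectorSpan_pair] at hspan
  obtain ⟨c, rfl⟩ := hspan
  have hc : c * ‖C.pos a - C.pos b‖ ^ 2 = C.F b - C.F a := by
    have := hu.2 a (by simp) b (by simp)
    rwa [vsub_eq_sub, real_inner_smul_left, real_inner_self_eq_norm_sq] at this
  have hc0 : c < 0 := by
    by_contra! hc0
    nlinarith [mul_nonneg hc0 (sq_nonneg ‖C.pos a - C.pos b‖)]
  have hb : C.pos a + (-c⁻¹) • c • (C.pos a -ᵥ C.pos b) = C.pos b := by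
    rw [smul_smul, neg_mul, inv_mul_cancel₀ hc0.ne, neg_smul, one_smul, vsub_eq_sub]
    abel
  rw [← hb]
  exact Reachable.add_smul ha (pair_mem_simplices hab) hu
    (neg_nonneg.mpr (inv_nonpos.mpr hc0.le)) (pos_mem_geom (by simp))
    (by rw [hb]; exact pos_mem_geom (by simp))

lemma reachable_of_forall_vertex (hgen : C.Generic) {q : C.V} {s : Finset C.V}
    (hs : s ∈ C.simplices) (hvert : ∀ v ∈ s, C.Reachable q (C.pos v)) :
    ∀ x ∈ C.geom s, C.Reachable q x := by
  induction s using Finset.strongInduction with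
  | H s ih =>
  intro x hx
  rcases (C.nonempty_mem s hs).exists_eq_singleton_or_nontrivial with ⟨v, rfl⟩ | hnt
  · rw [geom, Finset.coe_singleton, Set.image_singleton, convexHull_singleton] at hx
    exact hx ▸ hvert v (Finset.mem_singleton_self v)
  obtain ⟨u, hu⟩ := exists_isNegGradOn hs
  obtain ⟨v, hv, r, hr, hy⟩ := exists_sub_smul_mem_geom_erase hu (hu.ne_zero hgen hs hnt) hx
  have hface : s.erase v ∈ C.simplices :=
    C.down_closed s hs _ (Finset.erase_subset v s) hnt.erase_nonempty
  have hyreach := ih _ (Finset.erase_ssubset hv) hface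
    (fun w hw => hvert w (Finset.mem_of_mem_erase hw)) _ hy
  have := Reachable.add_smul hyreach hs hu hr
    (convexHull_mono (Set.image_mono (Finset.coe_subset.mpr (Finset.erase_subset v s))) hy)
    (by rwa [sub_add_cancel])
  rwa [sub_add_cancel] at this

lemma F_lt_of_adj_of_vdim_lt (hDM : C.IsDiscreteMorse) (htame : C.Tame) {p q v : C.V}
    (hqp : C.Adj q p) (hdim : C.vdim q + 1 = C.vdim p) (hval : C.F p < C.F q)
    (hvp : C.Adj v p) (hlt : C.vdim v < C.vdim p) (hvq : v ≠ q) : C.F v < C.F p := by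
  by_cases hcodim : C.vdim v + 1 = C.vdim p
  · by_contra! hle
    -- `q` and `v` would be two facets of `p` with values at least `F p`.
    exact hvq ((hDM p).2 ⟨hvp.symm, hcodim, hle⟩ ⟨hqp.symm, hdim, hval.le⟩)
  · exact htame v p hvp (by omega)

end PLComplex

theorem stmt18_general (C : PLComplex)
    (hDM : C.IsDiscreteMorse) (hgen : C.Generic) (htame : C.Tame)
    (p q : C.V) (hadj : C.Adj q p) (hdim : C.vdim q + 1 = C.vdim p)
    (hval : C.F p < C.F q) :
    ∀ x ∈ C.cellOf p,
      ∃ (k : ℕ) (t : ℕ → ℝ) (γ : ℝ → EuclideanSpace ℝ (Fin C.N)),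
        C.IsTraj k t γ ∧ γ (t 0) = C.pos q ∧ γ (t k) = x := by
  intro x hx
  simp only [PLComplex.cellOf, Set.mem_iUnion, Set.mem_ofPred_eq] at hx
  obtain ⟨s, ⟨hs, hps, hdims⟩, hxs⟩ := hx
  have hp : C.Reachable q (C.pos p) := (PLComplex.reachable_self q).of_edge hadj hval
  refine PLComplex.reachable_of_forall_vertex hgen hs (fun v hv => ?_) x hxs
  by_cases hvp : v = p
  · exact hvp ▸ hp
  by_cases hvq : v = q
  · exact hvq ▸ PLComplex.reachable_self q
  have hvp' : C.Adj v p := ⟨hvp, s, hs, hv, hps⟩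
  have hlt : C.vdim v < C.vdim p := (hdims v hv).lt_of_ne (C.flag s hs v hv p hps hvp)
  exact hp.of_edge hvp'.symm
    (PLComplex.F_lt_of_adj_of_vdim_lt hDM htame hadj hdim hval hvp' hlt hvq)

/-- Lemma 10.3: With a tame generic discrete Morse function and a sharp
metric, let `q` be an `(i−1)`-dimensional vertex and `p` an adjacent `i`-dimensional
vertex with `f(q) > f(p)`.  Then the cell `σ_p` of `X` corresponding to `p` is entirely
swept by the gradient trajectories starting at `q`. -/
theorem stmt18 (C : PLComplex)
    (hDM : C.IsDiscreteMorse) (hgen : C.Generic) (htame : C.Tame) (hsharp : C.Sharp)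
    (p q : C.V) (hadj : C.Adj q p) (hdim : C.vdim q + 1 = C.vdim p)
    (hval : C.F p < C.F q) :
    ∀ x ∈ C.cellOf p,
      ∃ (k : ℕ) (t : ℕ → ℝ) (γ : ℝ → EuclideanSpace ℝ (Fin C.N)),
        C.IsTraj k t γ ∧ γ (t 0) = C.pos q ∧ γ (t k) = x :=
  stmt18_general C hDM hgen htame p q hadj hdim hval
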